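/- For all sufficiently large natural numbers n, if c is a natural number with c + 2 ≤ (log n)/(4 log log n), then m_c^(2n) · C_n^c < (2n)!/(n!·2^n), where m_c = ((2c)!/(2^c·c!))·2c and C_n = binomial(2n,n)/(n+1). -/
import Mathlib


open Real

lemma aux_fact (c : ℕ) : (2*c).factorial ≤ (2*c)^c * 2^c * c.factorial := by
  induction c with
  | zero => simp
  | succ c ih =>
    have h2 : 2*(c+1) = 2*c + 1 + 1 := by ring
    rw [h2, Nat.factorial_succ, Nat.factorial_succ]
    have hpow : (2*c)^c ≤ (2*(c+1))^c := Nat.pow_le_pow_left (by omega) c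
    calc (2*c+1+1) * ((2*c+1) * (2*c).factorial)
        ≤ (2*(c+1)) * ((2*(c+1)) * ((2*(c+1))^c * 2^c * c.factorial)) := by
          apply Nat.mul_le_mul (by omega)
          apply Nat.mul_le_mul (by omega)
          calc (2*c).factorial ≤ (2*c)^c * 2^c * c.factorial := ih
            _ ≤ (2*(c+1))^c * 2^c * c.factorial := by
                exact Nat.mul_le_mul_right _ (Nat.mul_le_mul_right _ hpow)
      _ = (2*(c+1))^(c+1) * 2^(c+1) * ((c+1) * c.factorial) := by ring
  
lemma aux_catalan (n : ℕ) : catalan n ≤ 4 ^ n := by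
  have h1 : catalan n ≤ n.centralBinom := by
    calc catalan n ≤ (n+1) * catalan n := Nat.le_mul_of_pos_left _ (by omega)
      _ = n.centralBinom := succ_mul_catalan_eq_centralBinom n
  have h2 : n.centralBinom ≤ 4 ^ n := by
    rw [Nat.centralBinom]
    calc (2*n).choose n ≤ (2*n+1).choose n := Nat.choose_le_choose n (by omega)
      _ ≤ 4 ^ n := Nat.choose_middle_le_pow n
  omega

lemma aux_cb (n : ℕ) : 2 ^ n ≤ n.centralBinom := by
  induction n with
  | zero => simp [Nat.centralBinom_zero]
  | succ n ih =>
    have key : (n+1) * (2 * n.centralBinom) ≤ (n+1) * Nat.centralBinom (n+1) := by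
      rw [Nat.succ_mul_centralBinom_succ]
      nlinarith [Nat.centralBinom_pos n]
    have h2 : 2 * n.centralBinom ≤ Nat.centralBinom (n+1) :=
      Nat.le_of_mul_le_mul_left key (by omega)
    calc 2^(n+1) = 2 * 2^n := by ring
      _ ≤ 2 * n.centralBinom := by omega
      _ ≤ Nat.centralBinom (n+1) := h2

lemma aux_sq (n : ℕ) : n.factorial * (n.factorial * 2 ^ n) ≤ (2*n).factorial := by
  have h1 : (2*n).choose n * n.factorial * n.factorial = (2*n).factorial := by
    have := Nat.choose_mul_factorial_mul_factorial (show n ≤ 2*n by omega)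
    simpa [show 2*n - n = n by omega] using this
  have h2 : 2 ^ n ≤ (2*n).choose n := by
    have := aux_cb n
    rwa [Nat.centralBinom] at this
  calc n.factorial * (n.factorial * 2^n) ≤ n.factorial * (n.factorial * (2*n).choose n) := by
        exact Nat.mul_le_mul_left _ (Nat.mul_le_mul_left _ h2)
    _ = (2*n).choose n * n.factorial * n.factorial := by ring
    _ = (2*n).factorial := h1

lemma aux_stirling (n : ℕ) : (n:ℝ)^n ≤ Real.exp 1 ^ n * n.factorial := by
  induction n with
  | zero => simp
  | succ n ih =>
    rcases Nat.eq_zero_or_pos n with h | h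
    · subst h
      norm_num
    · have hn : (1:ℝ) ≤ (n:ℝ) := by exact_mod_cast h
      have hb : ((n:ℝ)+1)^n ≤ Real.exp 1 * (n:ℝ)^n := by
        have h1 : (1 + 1/(n:ℝ)) ≤ Real.exp (1/(n:ℝ)) := by
          have := Real.add_one_le_exp (1/(n:ℝ)); linarith
        have h2 : (1 + 1/(n:ℝ))^n ≤ Real.exp (1/(n:ℝ)) ^ n :=
          pow_le_pow_left₀ (by positivity) h1 n
        have h3 : Real.exp (1/(n:ℝ)) ^ n = Real.exp 1 := by
          rw [← Real.exp_nat_mul]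
          congr 1
          field_simp
        calc ((n:ℝ)+1)^n = ((n:ℝ) * (1 + 1/(n:ℝ)))^n := by
              congr 1; field_simp
          _ = (n:ℝ)^n * (1 + 1/(n:ℝ))^n := mul_pow _ _ _
          _ ≤ (n:ℝ)^n * Real.exp 1 := by
              apply mul_le_mul_of_nonneg_left (h3 ▸ h2) (by positivity)
          _ = Real.exp 1 * (n:ℝ)^n := mul_comm _ _
      push_cast
      calc ((n:ℝ)+1)^(n+1) = ((n:ℝ)+1) * ((n:ℝ)+1)^n := by ring
        _ ≤ ((n:ℝ)+1) * (Real.exp 1 * (n:ℝ)^n) := by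
            apply mul_le_mul_of_nonneg_left hb (by positivity)
        _ ≤ ((n:ℝ)+1) * (Real.exp 1 * (Real.exp 1 ^ n * n.factorial)) := by
            apply mul_le_mul_of_nonneg_left
              (mul_le_mul_of_nonneg_left ih (le_of_lt (Real.exp_pos 1))) (by positivity)
        _ = Real.exp 1 ^ (n+1) * (((n:ℝ)+1) * n.factorial) := by ring
        _ = Real.exp 1 ^ (n+1) * ((n+1).factorial : ℝ) := by
            rw [Nat.factorial_succ]; push_cast; ring

/-- For all sufficiently large `n`, if `c + 2 ≤ log n / (4 log log n)` then
`m_c^(2n) * C_n^c < (2n)!/(n! * 2^n)`, where `m_c = ((2c)!/(2^c c!)) * 2c`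
and `C_n` is the `n`-th Catalan number. -/
theorem few_applications_insufficient :
    ∃ N : ℕ, ∀ n : ℕ, N ≤ n → ∀ c : ℕ,
      (c : ℝ) + 2 ≤ Real.log n / (4 * Real.log (Real.log n)) →
      ((((2 * c).factorial : ℝ) / (2 ^ c * c.factorial)) * (2 * c)) ^ (2 * n) *
          (catalan n : ℝ) ^ c <
        ((2 * n).factorial : ℝ) / (n.factorial * 2 ^ n) := by
  use 6561
  intro n hn c hc
  have hn1 : 1 ≤ n := by omega
  have hnr : (6561:ℝ) ≤ (n:ℝ) := by exact_mod_cast hn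
  have hnr1 : (1:ℝ) ≤ (n:ℝ) := by linarith
  have hrhspos : (0:ℝ) < ((2 * n).factorial : ℝ) / (n.factorial * 2 ^ n) := by positivity
  have hlogn : (8:ℝ) ≤ Real.log n := by
    rw [Real.le_log_iff_exp_le (by linarith)]
    calc Real.exp 8 = Real.exp 1 ^ 8 := by
          rw [← Real.exp_nat_mul]; norm_num
      _ ≤ 3 ^ 8 := by
          apply pow_le_pow_left₀ (le_of_lt (Real.exp_pos 1))
          nlinarith [Real.exp_one_lt_d9]
      _ ≤ (n:ℝ) := by norm_num; linarith
  have hloglog : (2:ℝ) ≤ Real.log (Real.log n) := by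
    rw [Real.le_log_iff_exp_le (by linarith)]
    calc Real.exp 2 = Real.exp 1 ^ 2 := by
          rw [← Real.exp_nat_mul]; norm_num
      _ ≤ 8 := by nlinarith [Real.exp_one_lt_d9, Real.exp_pos 1]
      _ ≤ Real.log n := hlogn
  rcases Nat.eq_zero_or_pos c with hc0 | hc1
  · subst hc0
    simpa [zero_pow (show 2*n ≠ 0 by omega)] using hrhspos
  -- c ≥ 1 case
  have hcr : (1:ℝ) ≤ (c:ℝ) := by exact_mod_cast hc1
  have hc' : ((c:ℝ)+2) * (4 * Real.log (Real.log n)) ≤ Real.log n :=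
    (le_div_iff₀ (by linarith)).mp hc
  have h8c : (8:ℝ) * c ≤ Real.log n := by nlinarith
  -- Step 1: bound the left-hand side by (8c)^(2n(c+2))
  have hm : (((2 * c).factorial : ℝ) / (2 ^ c * c.factorial)) * (2 * c)
      ≤ ((2:ℝ)*c) ^ (c+2) := by
    have h1 : ((2*c).factorial : ℝ) ≤ ((2:ℝ)*c)^c * (2 ^ c * c.factorial) := by
      have := aux_fact c
      have : (((2*c).factorial : ℕ) : ℝ) ≤ (((2*c)^c * 2^c * c.factorial : ℕ) : ℝ) := by
        exact_mod_cast this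
      push_cast at this
      linarith [this]
    have h2 : ((2*c).factorial : ℝ) / (2 ^ c * c.factorial) ≤ ((2:ℝ)*c)^c := by
      rw [div_le_iff₀ (by positivity)]
      exact h1
    calc (((2 * c).factorial : ℝ) / (2 ^ c * c.factorial)) * (2 * c)
        ≤ ((2:ℝ)*c)^c * (2*c) := by
          apply mul_le_mul_of_nonneg_right h2 (by positivity)
      _ = ((2:ℝ)*c)^(c+1) := by rw [pow_succ]
      _ ≤ ((2:ℝ)*c)^(c+2) := by
          apply pow_le_pow_right₀ (by linarith) (by omega)
  have hcat : (catalan n : ℝ) ≤ (4:ℝ)^n := by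
    exact_mod_cast aux_catalan n
  have hmnn : (0:ℝ) ≤ (((2 * c).factorial : ℝ) / (2 ^ c * c.factorial)) * (2 * c) := by
    positivity
  have key1 : ((((2 * c).factorial : ℝ) / (2 ^ c * c.factorial)) * (2 * c)) ^ (2 * n) *
      (catalan n : ℝ) ^ c ≤ ((8:ℝ)*c) ^ (2*n*(c+2)) := by
    calc ((((2 * c).factorial : ℝ) / (2 ^ c * c.factorial)) * (2 * c)) ^ (2 * n) *
        (catalan n : ℝ) ^ c
        ≤ (((2:ℝ)*c) ^ (c+2)) ^ (2*n) * ((4:ℝ)^n) ^ c := by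
          apply mul_le_mul (pow_le_pow_left₀ hmnn hm _)
            (pow_le_pow_left₀ (by positivity) hcat _) (by positivity) (by positivity)
      _ = ((2:ℝ)*c) ^ ((c+2)*(2*n)) * (4:ℝ)^(n*c) := by rw [← pow_mul, ← pow_mul]
      _ ≤ ((2:ℝ)*c) ^ (2*n*(c+2)) * (4:ℝ)^(2*n*(c+2)) := by
          rw [show (c+2)*(2*n) = 2*n*(c+2) by ring]
          apply mul_le_mul_of_nonneg_left _ (by positivity)
          apply pow_le_pow_right₀ (by norm_num) (by nlinarith)
      _ = ((8:ℝ)*c) ^ (2*n*(c+2)) := by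
          rw [← mul_pow]; congr 1; ring
  -- Step 2: (8c)^(2n(c+2)) < n!
  have hnfpos : (0:ℝ) < (n.factorial : ℝ) := by positivity
  have h8cpos : (0:ℝ) < (8:ℝ)*c := by linarith
  have key2 : ((8:ℝ)*c) ^ (2*n*(c+2)) < (n.factorial : ℝ) := by
    rw [← Real.exp_log (show (0:ℝ) < ((8:ℝ)*c) ^ (2*n*(c+2)) by positivity),
        ← Real.exp_log hnfpos]
    apply Real.exp_lt_exp.mpr
    rw [Real.log_pow]
    have e0 : Real.log ((8:ℝ)*c) ≤ Real.log (Real.log n) := by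
      apply Real.log_le_log h8cpos h8c
    have e1 : ((2*n*(c+2) : ℕ) : ℝ) * Real.log ((8:ℝ)*c)
        ≤ (2*(n:ℝ)*((c:ℝ)+2)) * Real.log (Real.log n) := by
      have hcast : ((2*n*(c+2) : ℕ) : ℝ) = 2*(n:ℝ)*((c:ℝ)+2) := by push_cast; ring
      rw [hcast]
      apply mul_le_mul_of_nonneg_left e0 (by positivity)
    have e2 : (2*(n:ℝ)*((c:ℝ)+2)) * Real.log (Real.log n) ≤ (n:ℝ) * Real.log n / 2 := by
      nlinarith [mul_le_mul_of_nonneg_left hc' (show (0:ℝ) ≤ (n:ℝ)/2 by positivity)]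
    have e3 : (n:ℝ) * Real.log n / 2 < (n:ℝ) * Real.log n - (n:ℝ) := by
      nlinarith [mul_le_mul_of_nonneg_left hlogn (show (0:ℝ) ≤ (n:ℝ) by positivity)]
    have e4 : (n:ℝ) * Real.log n - (n:ℝ) ≤ Real.log (n.factorial) := by
      have hst := aux_stirling n
      have hlogle : Real.log ((n:ℝ)^n) ≤ Real.log (Real.exp 1 ^ n * n.factorial) :=
        Real.log_le_log (by positivity) hst
      rw [Real.log_pow, Real.log_mul (by positivity) (by positivity), Real.log_pow,
        Real.log_exp] at hlogle
      linarith
    linarith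
  -- Step 3: n! ≤ (2n)!/(n! 2^n)
  have key3 : (n.factorial : ℝ) ≤ ((2 * n).factorial : ℝ) / (n.factorial * 2 ^ n) := by
    rw [le_div_iff₀ (by positivity)]
    exact_mod_cast aux_sq n
  calc ((((2 * c).factorial : ℝ) / (2 ^ c * c.factorial)) * (2 * c)) ^ (2 * n) *
      (catalan n : ℝ) ^ c
      ≤ ((8:ℝ)*c) ^ (2*n*(c+2)) := key1
    _ < (n.factorial : ℝ) := key2
    _ ≤ ((2 * n).factorial : ℝ) / (n.factorial * 2 ^ n) := key3
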